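/- If R is a rate matrix on a finite state space (off-diagonal entries nonnegative, columns summing to zero) and p^ss is a strictly positive stationary distribution of R, then the relative entropy D(p(t) | p^ss) is non-increasing along solutions of the master equation dp/dt = R p: its time derivative satisfies d/dt D(p(t)|p^ss) ≤ 0 whenever p(t) is a strictly positive probability vector. -/

import Mathlib

open Matrix

/-!
Write `q = R p` and `x i = p i / pss i`. The derivative of the relative entropy is
`∑ i, (log (x i) + 1) * q i`; the `+ 1` part vanishes because the columns of `R` sum to zero.
The same fact rewrites `∑ i, f i * q i` as `∑ i j, R i j * p j * (f i - f j)`, and for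
`f = log ∘ x` each off-diagonal term is bounded by `R i j * pss j * (x i - x j)` using
`log y ≤ y - 1`. The bounds add up to `∑ i, x i * (R pss) i = 0` by stationarity.
-/

lemma mul_log_sub_log_le_sub {a b : ℝ} (ha : 0 < a) (hb : 0 < b) :
    a * (Real.log b - Real.log a) ≤ b - a := by
  rw [← Real.log_div hb.ne' ha.ne']
  calc a * Real.log (b / a) ≤ a * (b / a - 1) :=
        mul_le_mul_of_nonneg_left (Real.log_le_sub_one_of_pos (div_pos hb ha)) ha.le
    _ = b - a := by field_simp

lemma hasDerivAt_mul_log_div {x c : ℝ} (hx : x ≠ 0) (hc : c ≠ 0) :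
    HasDerivAt (fun y => y * Real.log (y / c)) (Real.log (x / c) + 1) x := by
  have h := ((Real.hasDerivAt_mul_log (div_ne_zero hx hc)).comp x
    ((hasDerivAt_id x).div_const c)).const_mul c
  have hfun : (fun y => y * Real.log (y / c)) = fun y => c * (y / c * Real.log (y / c)) := by
    funext y
    field_simp
  rw [hfun]
  exact h.congr_deriv (by field_simp)

lemma HasDerivAt.sum_mul_log_div {ι : Type*} [Fintype ι] {p : ℝ → ι → ℝ} {p' c : ι → ℝ}
    {t : ℝ} (hp : ∀ i, HasDerivAt (fun s => p s i) (p' i) t) (hpt : ∀ i, p t i ≠ 0)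
    (hc : ∀ i, c i ≠ 0) :
    HasDerivAt (fun s => ∑ i, p s i * Real.log (p s i / c i))
      (∑ i, (Real.log (p t i / c i) + 1) * p' i) t :=
  HasDerivAt.fun_sum fun i _ => by exact (hasDerivAt_mul_log_div (hpt i) (hc i)).comp t (hp i)

section RateMatrix

variable {S : Type*} [Fintype S] {R : Matrix S S ℝ}

lemma sum_mulVec_eq_zero (hcol : ∀ j, ∑ i, R i j = 0) (v : S → ℝ) :
    ∑ i, (R *ᵥ v) i = 0 := by
  simp only [mulVec, dotProduct]
  rw [Finset.sum_comm]
  simp [← Finset.sum_mul, hcol]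

lemma dotProduct_mulVec_eq_sum_sub (hcol : ∀ j, ∑ i, R i j = 0) (f v : S → ℝ) :
    f ⬝ᵥ R *ᵥ v = ∑ i, ∑ j, R i j * v j * (f i - f j) := by
  have hdiag : ∑ i, ∑ j, R i j * v j * f j = 0 := by
    rw [Finset.sum_comm]
    simp [← Finset.sum_mul, hcol]
  simp only [dotProduct, mulVec, Finset.mul_sum, mul_sub, Finset.sum_sub_distrib, hdiag,
    sub_zero]
  exact Finset.sum_congr rfl fun i _ => Finset.sum_congr rfl fun j _ => by ring

lemma dotProduct_log_div_mulVec_nonpos (hoff : ∀ i j, i ≠ j → 0 ≤ R i j)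
    (hcol : ∀ j, ∑ i, R i j = 0) {π : S → ℝ} (hπ : ∀ i, 0 < π i) (hstat : R *ᵥ π = 0)
    {p : S → ℝ} (hp : ∀ i, 0 < p i) :
    (fun i => Real.log (p i / π i)) ⬝ᵥ R *ᵥ p ≤ 0 := by
  set x : S → ℝ := fun i => p i / π i
  have hx : ∀ i, 0 < x i := fun i => div_pos (hp i) (hπ i)
  have hpx : ∀ i, p i = π i * x i := fun i => (mul_div_cancel₀ _ (hπ i).ne').symm
  have hterm : ∀ i j, R i j * p j * (Real.log (x i) - Real.log (x j)) ≤
      R i j * π j * (x i - x j) := by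
    intro i j
    obtain rfl | hij := eq_or_ne i j
    · simp
    rw [hpx j, mul_assoc, mul_assoc (R i j), mul_assoc]
    exact mul_le_mul_of_nonneg_left
      (mul_le_mul_of_nonneg_left (mul_log_sub_log_le_sub (hx j) (hx i)) (hπ j).le) (hoff i j hij)
  calc (fun i => Real.log (x i)) ⬝ᵥ R *ᵥ p
      = ∑ i, ∑ j, R i j * p j * (Real.log (x i) - Real.log (x j)) :=
        dotProduct_mulVec_eq_sum_sub hcol _ _
    _ ≤ ∑ i, ∑ j, R i j * π j * (x i - x j) :=
        Finset.sum_le_sum fun i _ => Finset.sum_le_sum fun j _ => hterm i j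
    _ = x ⬝ᵥ R *ᵥ π := (dotProduct_mulVec_eq_sum_sub hcol _ _).symm
    _ = 0 := by rw [hstat, dotProduct_zero]

end RateMatrix

theorem relative_entropy_nonincreasing_general {S : Type*} [Fintype S]
    (R : Matrix S S ℝ)
    (hoff : ∀ i j, i ≠ j → 0 ≤ R i j)
    (hcol : ∀ j, ∑ i, R i j = 0)
    (pss : S → ℝ) (hssPos : ∀ i, 0 < pss i)
    (hstat : R *ᵥ pss = 0)
    (p : ℝ → S → ℝ) (t : ℝ)
    (hODE : ∀ i, HasDerivAt (fun s => p s i) ((R *ᵥ p t) i) t)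
    (hpos : ∀ i, 0 < p t i)
    (d : ℝ)
    (hD : HasDerivAt (fun s => ∑ i, p s i * Real.log (p s i / pss i)) d t) :
    d ≤ 0 := by
  have hd : d = ∑ i, (Real.log (p t i / pss i) + 1) * (R *ᵥ p t) i :=
    hD.unique (.sum_mul_log_div hODE (fun i => (hpos i).ne') fun i => (hssPos i).ne')
  calc d = (fun i => Real.log (p t i / pss i)) ⬝ᵥ R *ᵥ p t + ∑ i, (R *ᵥ p t) i := by
        simp only [hd, dotProduct, add_mul, one_mul, Finset.sum_add_distrib]
    _ ≤ 0 := by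
        rw [sum_mulVec_eq_zero hcol, add_zero]
        exact dotProduct_log_div_mulVec_nonpos hoff hcol hssPos hstat hpos

/-- For a rate matrix `R` (off-diagonal entries nonnegative, columns summing to zero) on a
finite state space with strictly positive stationary distribution `pss`, the relative entropy
`D(p(t)|pss) = ∑ i, p t i * log (p t i / pss i)` is non-increasing along solutions of the
master equation `dp/dt = R p`: any derivative of it at a time `t` where `p t` is a strictly
positive probability vector is `≤ 0`. -/
theorem relative_entropy_nonincreasing {S : Type*} [Fintype S] [DecidableEq S]
    (R : Matrix S S ℝ)
    (hoff : ∀ i j, i ≠ j → 0 ≤ R i j)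
    (hcol : ∀ j, ∑ i, R i j = 0)
    (pss : S → ℝ) (hssPos : ∀ i, 0 < pss i) (hss1 : ∑ i, pss i = 1)
    (hstat : R *ᵥ pss = 0)
    (p : ℝ → S → ℝ) (t : ℝ)
    (hODE : ∀ i, HasDerivAt (fun s => p s i) ((R *ᵥ p t) i) t)
    (hpos : ∀ i, 0 < p t i) (hnorm : ∑ i, p t i = 1)
    (d : ℝ)
    (hD : HasDerivAt (fun s => ∑ i, p s i * Real.log (p s i / pss i)) d t) :
    d ≤ 0 :=
  relative_entropy_nonincreasing_general R hoff hcol pss hssPos hstat p t hODE hpos d hD
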